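/- For m ≥ 2 and 1 ≤ i ≤ m-1, the sequence of Boros-Moll coefficients is log-concave: d_i(m)^2 ≥ d_{i-1}(m) * d_{i+1}(m). -/

import Mathlib

/-!
For fixed `m`, creative telescoping in the summation index `k`, with Zeilberger's certificate
`i (2m + 1 - 2k) T(i, k)` for the summand `T(i, k)` of `d_i(m)`, yields the three-term recurrence
`i (i + 1) d_{i+1} + (m + i)(m + 1 - i) d_{i-1} = i (2m + 1) d_i`.
Along the recurrence, `i (i + 1) (d_i² - d_{i-1} d_{i+1})` is a binary quadratic form
`Q_i(d_{i-1}, d_i)`, positive semidefinite as long as `4i³ - 3i ≤ 4m(m + 1)`. For larger `i`, a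
downward induction starting from `d_{m+1} = 0` carries `Q_i ≥ 0` together with the bound
`2 (i + 1) d_i ≤ (2m + 1) d_{i-1}`, which controls the cross term when passing from `i + 1`
to `i`.
-/

open Finset

/-- The Boros-Moll coefficient `d_i(m)`. -/
def bmCoeff (m i : ℕ) : ℚ :=
  (∑ k ∈ Finset.Icc i m,
    (2:ℚ)^k * (Nat.choose (2*m-2*k) (m-k)) * (Nat.choose (m+k) k) * (Nat.choose k i)) / 2^(2*m)

/-- The rescaled coefficient `D_i(m)`. -/
def bmD (m i : ℕ) : ℚ :=
  (Nat.choose (2*m) (m-i)) * (Nat.factorial m) * (Nat.factorial i) *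
    (Nat.factorial (m-i)) * 2^i * bmCoeff m i

theorem Nat.cast_choose_succ_right_eq {R : Type*} [CommRing R] (n j : ℕ) :
    (n.choose (j + 1) : R) * (j + 1) = n.choose j * (n - j) := by
  rcases le_or_gt j n with h | h
  · simpa [Nat.cast_sub h] using congrArg (Nat.cast (R := R)) (Nat.choose_succ_right_eq n j)
  · simp [Nat.choose_eq_zero_of_lt h, Nat.choose_eq_zero_of_lt (h.trans j.lt_succ_self)]

namespace BorosMoll

def term (m i k : ℕ) : ℚ :=
  2 ^ k * (2 * m - 2 * k).choose (m - k) * (m + k).choose k * k.choose i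

def cert (m i k : ℕ) : ℚ := i * (2 * m + 1 - 2 * k) * term m i k

theorem term_recurrence_eq_cert_sub {m i k : ℕ} (hi : 1 ≤ i) (hk : k < m) :
    i * (i + 1) * term m (i + 1) k + (m + i) * (m + 1 - i) * term m (i - 1) k
      - i * (2 * m + 1) * term m i k = cert m i (k + 1) - cert m i k := by
  obtain ⟨j, rfl⟩ : ∃ j, m = k + j + 1 := ⟨m - k - 1, by omega⟩
  obtain ⟨s, rfl⟩ : ∃ s, i = s + 1 := ⟨i - 1, by omega⟩
  simp only [term, cert, Nat.add_sub_cancel,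
    show 2 * (k + j + 1) - 2 * k = 2 * (j + 1) by omega, show k + j + 1 - k = j + 1 by omega,
    show 2 * (k + j + 1) - 2 * (k + 1) = 2 * j by omega, show k + j + 1 - (k + 1) = j by omega]
  push_cast
  -- These ratios turn every term into a multiple of `C(2j, j) C(2k + j + 1, k) C(k, s)`.
  have hcentral : ((j : ℚ) + 1) * (2 * (j + 1)).choose (j + 1)
      = 2 * (2 * j + 1) * (2 * j).choose j := by
    exact_mod_cast Nat.succ_mul_centralBinom_succ j
  have hdiag : ((k : ℚ) + 1) * (k + j + 1 + (k + 1)).choose (k + 1)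
      = (2 * k + j + 2) * (k + j + 1 + k).choose k := by
    have h := congrArg (Nat.cast (R := ℚ)) (Nat.add_one_mul_choose_eq (k + j + 1 + k) k)
    push_cast at h
    linear_combination -h
  have hup : ((s : ℚ) + 1) * (k + 1).choose (s + 1) = (k + 1) * k.choose s := by
    have h := congrArg (Nat.cast (R := ℚ)) (Nat.add_one_mul_choose_eq k s)
    push_cast at h
    linear_combination -h
  have hnext := Nat.cast_choose_succ_right_eq (R := ℚ) k (s + 1)
  have hprev := Nat.cast_choose_succ_right_eq (R := ℚ) k s
  push_cast at hnext hprev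
  linear_combination (2 : ℚ) ^ k * (
    ((2 * (j + 1)).choose (j + 1) : ℚ) * (k + j + 1 + k).choose k * (s + 1) * hnext
    - ((2 * (j + 1)).choose (j + 1) : ℚ) * (k + j + 1 + k).choose k * (k + s + 1) * hprev
    + ((k + j + 1 + k).choose k : ℚ) * k.choose s * (2 * k + j + 2) * hcentral
    - 2 * (2 * j + 1) * ((2 * j).choose j : ℚ) * (k + j + 1 + (k + 1)).choose (k + 1) * hup
    - 2 * (2 * j + 1) * ((2 * j).choose j : ℚ) * k.choose s * hdiag)

theorem term_recurrence_self {m i : ℕ} (hi : 1 ≤ i) :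
    i * (i + 1) * term m (i + 1) m + (m + i) * (m + 1 - i) * term m (i - 1) m
      - i * (2 * m + 1) * term m i m = -cert m i m := by
  obtain ⟨s, rfl⟩ : ∃ s, i = s + 1 := ⟨i - 1, by omega⟩
  have rV := Nat.cast_choose_succ_right_eq (R := ℚ) m (s + 1)
  have rW := Nat.cast_choose_succ_right_eq (R := ℚ) m s
  simp only [term, cert, Nat.sub_self, Nat.choose_self, Nat.add_sub_cancel]
  push_cast at rV rW ⊢
  linear_combination (2 : ℚ) ^ m * ((m + m).choose m : ℚ) * ((s + 1) * rV - (m + s + 1) * rW)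

theorem bmCoeff_eq_sum_range (m i : ℕ) :
    bmCoeff m i = (∑ k ∈ range (m + 1), term m i k) / 2 ^ (2 * m) := by
  refine congrArg (· / _) (sum_subset (fun k hk => ?_) fun k hk hki => ?_)
  · simp only [mem_Icc, mem_range] at hk ⊢
    omega
  · simp only [mem_Icc, mem_range, not_and_or, not_le] at hk hki
    simp [Nat.choose_eq_zero_of_lt (show k < i by omega)]

theorem bmCoeff_recurrence {m i : ℕ} (hi : 1 ≤ i) :
    i * (i + 1) * bmCoeff m (i + 1) + (m + i) * (m + 1 - i) * bmCoeff m (i - 1)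
      = i * (2 * m + 1) * bmCoeff m i := by
  have hsum : ∑ k ∈ range (m + 1), (i * (i + 1) * term m (i + 1) k
      + (m + i) * (m + 1 - i) * term m (i - 1) k - i * (2 * m + 1) * term m i k) = 0 := by
    rw [sum_range_succ, sum_congr rfl fun k hk => term_recurrence_eq_cert_sub hi (mem_range.1 hk),
      sum_range_sub, term_recurrence_self hi]
    simp [cert, term, Nat.choose_eq_zero_of_lt hi]
  rw [sum_sub_distrib, sum_add_distrib, ← mul_sum, ← mul_sum, ← mul_sum] at hsum
  rw [bmCoeff_eq_sum_range, bmCoeff_eq_sum_range, bmCoeff_eq_sum_range]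
  linear_combination hsum / 2 ^ (2 * m)

theorem bmCoeff_nonneg (m i : ℕ) : 0 ≤ bmCoeff m i := by
  unfold bmCoeff
  positivity

theorem bmCoeff_eq_zero {m i : ℕ} (h : m < i) : bmCoeff m i = 0 := by
  simp [bmCoeff, Icc_eq_empty_of_lt h]

section LogConcavity

variable {K : Type*} [Field K] [LinearOrder K] [IsStrictOrderedRing K]

def quadForm (m i : ℕ) (a b : K) : K :=
  i * (i + 1) * b ^ 2 - i * (2 * m + 1) * a * b + (m + i) * (m + 1 - i) * a ^ 2

/-- `i * quadDisc m i` is the discriminant of `quadForm m i`. -/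
def quadDisc (m i : ℕ) : ℤ := 4 * i ^ 3 - 3 * i - 4 * m * (m + 1)

theorem quadDisc_le_succ (m i : ℕ) : quadDisc m i ≤ quadDisc m (i + 1) := by
  unfold quadDisc
  push_cast
  nlinarith

theorem add_mul_add_one_sub_pos {m i : ℕ} (hi : 1 ≤ i) (him : i ≤ m) :
    (0 : K) < (m + i) * (m + 1 - i) := by
  have hi' : (1 : K) ≤ i := by exact_mod_cast hi
  have him' : (i : K) ≤ m := by exact_mod_cast him
  exact mul_pos (by linarith) (by linarith)

theorem quadForm_eq_of_recurrence {m i : ℕ} {a b c : K}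
    (h : i * (i + 1) * c + (m + i) * (m + 1 - i) * a = i * (2 * m + 1) * b) :
    quadForm m i a b = i * (i + 1) * (b ^ 2 - a * c) := by
  unfold quadForm
  linear_combination a * h

theorem quadForm_nonneg_of_quadDisc_nonpos {m i : ℕ} (h : quadDisc m i ≤ 0) (a b : K) :
    0 ≤ quadForm m i a b := by
  have hdisc : (0 : K) ≤ -(quadDisc m i : K) := by exact_mod_cast neg_nonneg.2 h
  have key : 4 * (i + 1) * quadForm m i a b
      = i * (2 * (i + 1) * b - (2 * m + 1) * a) ^ 2 + -(quadDisc m i : K) * a ^ 2 := by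
    simp only [quadForm, quadDisc]
    push_cast
    ring
  refine nonneg_of_mul_nonneg_right (a := 4 * ((i : K) + 1)) ?_ (by positivity)
  rw [key]
  positivity

theorem quadForm_nonneg_of_succ {m i : ℕ} {a b c : K} (hi : 1 ≤ i) (him : i ≤ m)
    (hrec : i * (i + 1) * c + (m + i) * (m + 1 - i) * a = i * (2 * m + 1) * b)
    (hc : 0 ≤ c) (hcb : 2 * (i + 2) * c ≤ (2 * m + 1) * b) (hQ : 0 ≤ quadForm m (i + 1) b c) :
    0 ≤ quadForm m i a b := by
  have hi' : (1 : K) ≤ i := by exact_mod_cast hi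
  have hP : (0 : K) < (m + i) * (m + 1 - i) := add_mul_add_one_sub_pos hi him
  have hc2 : i * (i + 1) * c ^ 2 ≤ (m * (m + 1) + i * (i + 1)) * b ^ 2 := by
    have hsq := pow_le_pow_left₀ (by positivity) hcb 2
    nlinarith [mul_nonneg (sq_nonneg c) (by nlinarith : (0 : K) ≤ (i + 2) ^ 2 - i * (i + 1)),
      mul_nonneg (sq_nonneg b) (by nlinarith : (0 : K) ≤ 4 * i * (i + 1) - 1)]
  have key : (i + 1) * ((m + i) * (m + 1 - i)) * quadForm m i a b
      = i * (i + 1) * (i * quadForm m (i + 1) b c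
        + ((m * (m + 1) + i * (i + 1)) * b ^ 2 - i * (i + 1) * c ^ 2)) := by
    simp only [quadForm]
    push_cast
    linear_combination (i + 1) * ((m + i) * (m + 1 - i) * a - i * (i + 1) * c) * hrec
  refine nonneg_of_mul_nonneg_right (a := (i + 1) * ((m + i) * (m + 1 - i) : K)) ?_
    (by positivity)
  rw [key]
  have := sub_nonneg.2 hc2
  positivity

theorem two_mul_le_of_succ {m i : ℕ} {a b c : K} (hi : 1 ≤ i) (him : i ≤ m)
    (hdisc : 0 ≤ quadDisc m i)
    (hrec : i * (i + 1) * c + (m + i) * (m + 1 - i) * a = i * (2 * m + 1) * b)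
    (hc : 0 ≤ c) (hcb : 2 * (i + 2) * c ≤ (2 * m + 1) * b) :
    2 * (i + 1) * b ≤ (2 * m + 1) * a := by
  have hP : (0 : K) < (m + i) * (m + 1 - i) := add_mul_add_one_sub_pos hi him
  have hdisc' : (0 : K) ≤ quadDisc m i := by exact_mod_cast hdisc
  have hb : 0 ≤ b := by nlinarith
  have key : 2 * ((m + i) * (m + 1 - i)) * ((2 * m + 1) * a - 2 * (i + 1) * b)
      = quadDisc m i * b + i * (2 * m + 1) * ((2 * m + 1) * b - 2 * (i + 1) * c) := by
    simp only [quadDisc]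
    push_cast
    linear_combination 2 * (2 * m + 1) * hrec
  have : 0 ≤ (2 * m + 1) * b - 2 * (i + 1) * c := by linarith
  have h : 0 ≤ 2 * ((m + i) * (m + 1 - i)) * ((2 * m + 1) * a - 2 * (i + 1) * b) := by
    rw [key]
    positivity
  linarith [nonneg_of_mul_nonneg_right h (by positivity)]

theorem quadForm_nonneg_and_two_mul_le_of_recurrence {m : ℕ} {d : ℕ → K}
    (hrec : ∀ i, 1 ≤ i → i ≤ m →
      i * (i + 1) * d (i + 1) + (m + i) * (m + 1 - i) * d (i - 1) = i * (2 * m + 1) * d i)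
    (hd : ∀ i, 0 ≤ d i) (htop : d (m + 1) = 0) {i : ℕ} (hi : 1 ≤ i) (him : i ≤ m + 1)
    (hdisc : 0 ≤ quadDisc m i) :
    0 ≤ quadForm m i (d (i - 1)) (d i) ∧ 2 * (i + 1) * d i ≤ (2 * m + 1) * d (i - 1) := by
  induction him using Nat.decreasingInduction with
  | self =>
    simpa [quadForm, htop] using mul_nonneg (by positivity : (0 : K) ≤ 2 * m + 1) (hd m)
  | of_succ k hk ih =>
    obtain ⟨hQ, hcb⟩ := ih (by omega) (hdisc.trans (quadDisc_le_succ m k))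
    rw [Nat.add_sub_cancel] at hQ hcb
    push_cast at hcb
    rw [show (k : K) + 1 + 1 = k + 2 by ring] at hcb
    exact ⟨quadForm_nonneg_of_succ hi (by omega) (hrec k hi (by omega)) (hd _) hcb hQ,
      two_mul_le_of_succ hi (by omega) hdisc (hrec k hi (by omega)) (hd _) hcb⟩

theorem log_concave_of_recurrence {m : ℕ} {d : ℕ → K}
    (hrec : ∀ i, 1 ≤ i → i ≤ m →
      i * (i + 1) * d (i + 1) + (m + i) * (m + 1 - i) * d (i - 1) = i * (2 * m + 1) * d i)
    (hd : ∀ i, 0 ≤ d i) (htop : d (m + 1) = 0) {i : ℕ} (hi : 1 ≤ i) (him : i ≤ m) :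
    d (i - 1) * d (i + 1) ≤ d i ^ 2 := by
  have hQ : 0 ≤ quadForm m i (d (i - 1)) (d i) := by
    rcases le_total (quadDisc m i) 0 with h | h
    · exact quadForm_nonneg_of_quadDisc_nonpos h _ _
    · exact (quadForm_nonneg_and_two_mul_le_of_recurrence hrec hd htop hi (by omega) h).1
  rw [quadForm_eq_of_recurrence (hrec i hi him)] at hQ
  have hi' : (1 : K) ≤ i := by exact_mod_cast hi
  linarith [nonneg_of_mul_nonneg_right hQ (by positivity)]

end LogConcavity

end BorosMoll

theorem bmCoeff_log_concave_general (m i : ℕ) (hi1 : 1 ≤ i) (hi2 : i ≤ m - 1) :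
    (bmCoeff m i)^2 ≥ bmCoeff m (i-1) * bmCoeff m (i+1) :=
  BorosMoll.log_concave_of_recurrence (fun _ hi _ => BorosMoll.bmCoeff_recurrence hi)
    (BorosMoll.bmCoeff_nonneg m) (BorosMoll.bmCoeff_eq_zero m.lt_succ_self) hi1 (by omega)

theorem bmCoeff_log_concave (m i : ℕ) (hm : 2 ≤ m) (hi1 : 1 ≤ i) (hi2 : i ≤ m - 1) :
    (bmCoeff m i)^2 ≥ bmCoeff m (i-1) * bmCoeff m (i+1) :=
  bmCoeff_log_concave_general m i hi1 hi2
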